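/- arXiv:2502.08237 — 2 statements merged into one kernel-verified Lean document; each statement's English description precedes it below -/
import Mathlib

section
/- For all real numbers a, b ≥ 1 and all real k > 2, one has (a² + b²)^{k/2} ≤ a^k + b^k + 2^{k/2+1} ( a² b^{k-2} · 1_{a ≤ b} + a^{k-2} b² · 1_{b ≤ a} ). -/
/-!
Assume `a ≤ b` and put `p = k / 2`, `x = a²`, `y = b²`, so that `x ≤ y`. Writing
`x + y = (1 - r) y + r (2y)` with `r = x / y ∈ [0, 1]`, convexity of `t ↦ t ^ p` gives
`(x + y) ^ p ≤ y ^ p + (2 ^ p - 1) x y ^ (p - 1)`, i.e. the claim with the smaller constant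
`2 ^ p - 1`; the case `b ≤ a` is symmetric.
-/

open Real

lemma add_rpow_le_rpow_add_mul_rpow_sub_one {x y p : ℝ} (hx : 0 ≤ x) (hxy : x ≤ y)
    (hp : 1 ≤ p) :
    (x + y) ^ p ≤ y ^ p + (2 ^ p - 1) * (x * y ^ (p - 1)) := by
  rcases (hx.trans hxy).eq_or_lt with rfl | hy
  · obtain rfl : x = 0 := le_antisymm hxy hx
    simp [zero_rpow (by linarith : p ≠ 0)]
  set r := x / y
  have hr : r * y = x := div_mul_cancel₀ x hy.ne'
  have hconv := (convexOn_rpow hp).2 (Set.mem_Ici.2 hy.le)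
    (Set.mem_Ici.2 (by linarith : 0 ≤ 2 * y)) (sub_nonneg.2 ((div_le_one hy).2 hxy))
    (div_nonneg hx hy.le) (sub_add_cancel 1 r)
  calc (x + y) ^ p = ((1 - r) • y + r • (2 * y)) ^ p := by
        rw [smul_eq_mul, smul_eq_mul, ← hr]; ring_nf
    _ ≤ (1 - r) • y ^ p + r • (2 * y) ^ p := hconv
    _ = y ^ p + (2 ^ p - 1) * (r * y * y ^ (p - 1)) := by
        rw [smul_eq_mul, smul_eq_mul, mul_rpow zero_le_two hy.le, rpow_sub_one hy.ne']
        field_simp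
        ring
    _ = y ^ p + (2 ^ p - 1) * (x * y ^ (p - 1)) := by rw [hr]

lemma sq_add_sq_rpow_half_le {a b k : ℝ} (ha : 0 ≤ a) (hab : a ≤ b) (hk : 2 ≤ k) :
    (a ^ 2 + b ^ 2) ^ (k / 2) ≤ a ^ k + b ^ k + 2 ^ (k / 2 + 1) * (a ^ 2 * b ^ (k - 2)) := by
  have hb : 0 ≤ b := ha.trans hab
  have hsq_rpow : ∀ s : ℝ, (b ^ 2) ^ s = b ^ (2 * s) := fun s => by
    rw [← rpow_natCast, ← rpow_mul hb, Nat.cast_ofNat]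
  have hmain := add_rpow_le_rpow_add_mul_rpow_sub_one (sq_nonneg a) (pow_le_pow_left₀ ha hab 2)
    (by linarith : 1 ≤ k / 2)
  rw [hsq_rpow, hsq_rpow, show 2 * (k / 2) = k by ring, show 2 * (k / 2 - 1) = k - 2 by ring]
    at hmain
  have hconst : (2 : ℝ) ^ (k / 2) - 1 ≤ 2 ^ (k / 2 + 1) := by
    linarith [rpow_le_rpow_of_exponent_le one_le_two (by linarith : k / 2 ≤ k / 2 + 1)]
  have := mul_le_mul_of_nonneg_right hconst (by positivity : 0 ≤ a ^ 2 * b ^ (k - 2))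
  linarith [rpow_nonneg ha k]

theorem p_binomial_inequality (a b k : ℝ) (ha : 1 ≤ a) (hb : 1 ≤ b) (hk : 2 < k) :
    (a ^ 2 + b ^ 2) ^ (k / 2) ≤
      a ^ k + b ^ k +
        2 ^ (k / 2 + 1) *
          (a ^ 2 * b ^ (k - 2) * (if a ≤ b then (1 : ℝ) else 0) +
            a ^ (k - 2) * b ^ 2 * (if b ≤ a then (1 : ℝ) else 0)) := by
  have ha0 : 0 ≤ a := zero_le_one.trans ha
  have hb0 : 0 ≤ b := zero_le_one.trans hb
  rcases le_total a b with hab | hba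
  · refine (sq_add_sq_rpow_half_le ha0 hab hk.le).trans ?_
    rw [if_pos hab, mul_one]
    gcongr
    exact le_add_of_nonneg_right (mul_nonneg (by positivity) (by split_ifs <;> norm_num))
  · refine (add_comm (a ^ 2) (b ^ 2) ▸ sq_add_sq_rpow_half_le hb0 hba hk.le).trans ?_
    rw [if_pos hba, mul_one, add_comm (b ^ k), mul_comm (b ^ 2)]
    gcongr
    exact le_add_of_nonneg_left (mul_nonneg (by positivity) (by split_ifs <;> norm_num))
end

section
/- Let 0 < ω ≤ 1, and suppose W₁ ≤ −Ā m_{k+ζ} + B̄ and W₂ ≤ D m₂ m_k with Ā, m₂ > 0, B̄, D, m_k, m_{k+ζ} ≥ 0, and suppose the interpolation m_k ≤ m₂^{ζ/(k-2+ζ)} m_{k+ζ}^{(k-2)/(k-2+ζ)} holds, ζ ∈ (0,2], k > 2. Then ω W₁ + (1−ω) W₂ ≤ −(ω Ā / 2) m₂^{−ζ/(k-2)} m_k^{1+ζ/(k-2)} + ω B̄ + ((1−ω) D)^{(k-2+ζ)/ζ} m₂^{(k-2+ζ)/ζ + 1} (ω Ā / 2)^{−(k-2)/ζ}. -/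
/-!
Raising the interpolation inequality to the power `(k-2+ζ)/(k-2)` bounds
`m₂^(-ζ/(k-2)) m_k^(1+ζ/(k-2))` by `m_{k+ζ}`. Young's inequality with the conjugate exponents
`(k-2+ζ)/ζ` and `(k-2+ζ)/(k-2)`, weighted by `δ = ω Ā / 2`, splits `(1-ω) D m₂ m_k` into `δ` times
that quantity plus a constant, and the first part is absorbed by half of `-ω Ā m_{k+ζ}`.
-/

open Real

theorem rpow_neg_div_mul_rpow_le_of_le_rpow_mul_rpow {m x y α β : ℝ} (hm : 0 < m) (hx : 0 ≤ x)
    (hy : 0 ≤ y) (hβ : 0 < β) (hβα : 0 < β + α)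
    (h : x ≤ m ^ (α / (β + α)) * y ^ (β / (β + α))) :
    m ^ (-α / β) * x ^ (1 + α / β) ≤ y := by
  have hr : 1 + α / β = (β + α) / β := by field_simp
  have hraised : x ^ (1 + α / β) ≤ m ^ (α / β) * y := calc
    x ^ (1 + α / β) ≤ (m ^ (α / (β + α)) * y ^ (β / (β + α))) ^ ((β + α) / β) := by
      rw [hr]; gcongr
    _ = m ^ (α / β) * y := by
      rw [mul_rpow (by positivity) (by positivity), ← rpow_mul hm.le, ← rpow_mul hy]
      field_simp
      rw [rpow_one]
  calc m ^ (-α / β) * x ^ (1 + α / β) ≤ m ^ (-α / β) * (m ^ (α / β) * y) := by gcongr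
    _ = y := by rw [← mul_assoc, ← rpow_add hm, neg_div, neg_add_cancel, rpow_zero, one_mul]

theorem Real.young_inequality_of_nonneg_weighted {a b p q δ : ℝ} (ha : 0 ≤ a) (hb : 0 ≤ b)
    (hδ : 0 < δ) (hpq : p.HolderConjugate q) :
    a * b ≤ δ ^ (-(p / q)) * a ^ p + δ * b ^ q := by
  have hsplit : a * b = (δ ^ (-q⁻¹) * a) * (δ ^ q⁻¹ * b) := by
    rw [mul_mul_mul_comm, ← rpow_add hδ, neg_add_cancel, rpow_zero, one_mul]
  have hleft : (δ ^ (-q⁻¹) * a) ^ p = δ ^ (-(p / q)) * a ^ p := by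
    rw [mul_rpow (by positivity) ha, ← rpow_mul hδ.le]
    ring_nf
  have hright : (δ ^ q⁻¹ * b) ^ q = δ * b ^ q := by
    rw [mul_rpow (by positivity) hb, ← rpow_mul hδ.le, inv_mul_cancel₀ hpq.symm.ne_zero, rpow_one]
  calc a * b ≤ (δ ^ (-q⁻¹) * a) ^ p / p + (δ ^ q⁻¹ * b) ^ q / q := by
        rw [hsplit]; exact young_inequality_of_nonneg (by positivity) (by positivity) hpq
    _ ≤ (δ ^ (-q⁻¹) * a) ^ p + (δ ^ q⁻¹ * b) ^ q := by
        gcongr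
        · exact div_le_self (by positivity) hpq.lt.le
        · exact div_le_self (by positivity) hpq.symm.lt.le
    _ = δ ^ (-(p / q)) * a ^ p + δ * b ^ q := by rw [hleft, hright]

theorem mul_mul_le_absorbed_add_remainder {s ζ c m y δ : ℝ} (hs : 0 < s) (hζ : 0 < ζ)
    (hc : 0 ≤ c) (hm : 0 < m) (hy : 0 ≤ y) (hδ : 0 < δ) :
    c * m * y ≤ δ * (m ^ (-ζ / s) * y ^ (1 + ζ / s))
      + c ^ ((s + ζ) / ζ) * m ^ ((s + ζ) / ζ + 1) * δ ^ (-s / ζ) := by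
  set p := (s + ζ) / ζ with hp_def
  have hpq : p.HolderConjugate ((s + ζ) / s) := by
    simpa only [inv_div] using
      HolderConjugate.inv_inv (a := ζ / (s + ζ)) (b := s / (s + ζ)) (by positivity)
        (by positivity) (by field_simp; ring)
  have hp : 0 < p := hpq.pos
  -- `c m y = (c m^((p+1)/p)) (m^(-1/p) y)`, chosen so that the `q`-th power of the second factor
  -- is the quantity controlled by interpolation.
  have hyoung := young_inequality_of_nonneg_weighted (a := c * m ^ ((p + 1) / p))
    (b := m ^ (-1 / p) * y) (by positivity) (by positivity) hδ hpq
  have hprod : c * m ^ ((p + 1) / p) * (m ^ (-1 / p) * y) = c * m * y := calc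
    _ = c * (m ^ ((p + 1) / p) * m ^ (-1 / p)) * y := by ring
    _ = c * m * y := by
      rw [← rpow_add hm, ← add_div, add_neg_cancel_right, div_self hp.ne', rpow_one]
  have hleft : (c * m ^ ((p + 1) / p)) ^ p = c ^ p * m ^ (p + 1) := by
    rw [mul_rpow hc (by positivity), ← rpow_mul hm.le, div_mul_cancel₀ _ hp.ne']
  have hright : (m ^ (-1 / p) * y) ^ ((s + ζ) / s) = m ^ (-ζ / s) * y ^ (1 + ζ / s) := by
    rw [mul_rpow (by positivity) hy, ← rpow_mul hm.le, hp_def]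
    congr 2 <;> field_simp
  have hweight : -(p / ((s + ζ) / s)) = -s / ζ := by rw [hp_def, neg_div]; field_simp
  rw [hprod, hleft, hright, hweight] at hyoung
  linarith

theorem omega_convex_absorption_general
    (ω W₁ W₂ Abar B D m₂ mk mkζ k ζ : ℝ)
    (hω0 : 0 < ω) (hω1 : ω ≤ 1)
    (hA : 0 < Abar) (hm2 : 0 < m₂) (hD : 0 ≤ D)
    (hmk : 0 ≤ mk) (hmkζ : 0 ≤ mkζ)
    (hW1 : W₁ ≤ -Abar * mkζ + B) (hW2 : W₂ ≤ D * m₂ * mk)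
    (hζ0 : 0 < ζ) (hk : 2 < k)
    (hinterp : mk ≤ m₂ ^ (ζ / (k - 2 + ζ)) * mkζ ^ ((k - 2) / (k - 2 + ζ))) :
    ω * W₁ + (1 - ω) * W₂
      ≤ -(ω * Abar / 2) * m₂ ^ (-ζ / (k - 2)) * mk ^ (1 + ζ / (k - 2)) + ω * B
        + ((1 - ω) * D) ^ ((k - 2 + ζ) / ζ) * m₂ ^ ((k - 2 + ζ) / ζ + 1)
          * (ω * Abar / 2) ^ (-(k - 2) / ζ) := by
  have hs : 0 < k - 2 := by linarith
  have hω : 0 ≤ 1 - ω := by linarith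
  have hmoment := rpow_neg_div_mul_rpow_le_of_le_rpow_mul_rpow hm2 hmk hmkζ hs (by linarith)
    hinterp
  have habsorb := mul_mul_le_absorbed_add_remainder hs hζ0 (mul_nonneg hω hD) hm2 hmk
    (by positivity : 0 < ω * Abar / 2)
  have hgain := mul_le_mul_of_nonneg_left hmoment (by positivity : 0 ≤ ω * Abar)
  have hpolyatomic := mul_le_mul_of_nonneg_left hW1 hω0.le
  have hfrozen := mul_le_mul_of_nonneg_left hW2 hω
  linarith

theorem omega_convex_absorption
    (ω W₁ W₂ Abar B D m₂ mk mkζ k ζ : ℝ)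
    (hω0 : 0 < ω) (hω1 : ω ≤ 1)
    (hA : 0 < Abar) (hm2 : 0 < m₂) (hB : 0 ≤ B) (hD : 0 ≤ D)
    (hmk : 0 ≤ mk) (hmkζ : 0 ≤ mkζ)
    (hW1 : W₁ ≤ -Abar * mkζ + B) (hW2 : W₂ ≤ D * m₂ * mk)
    (hζ0 : 0 < ζ) (hζ2 : ζ ≤ 2) (hk : 2 < k)
    (hinterp : mk ≤ m₂ ^ (ζ / (k - 2 + ζ)) * mkζ ^ ((k - 2) / (k - 2 + ζ))) :
    ω * W₁ + (1 - ω) * W₂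
      ≤ -(ω * Abar / 2) * m₂ ^ (-ζ / (k - 2)) * mk ^ (1 + ζ / (k - 2)) + ω * B
        + ((1 - ω) * D) ^ ((k - 2 + ζ) / ζ) * m₂ ^ ((k - 2 + ζ) / ζ + 1)
          * (ω * Abar / 2) ^ (-(k - 2) / ζ) :=
  omega_convex_absorption_general ω W₁ W₂ Abar B D m₂ mk mkζ k ζ hω0 hω1 hA hm2 hD hmk hmkζ hW1 hW2
    hζ0 hk hinterp
end
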